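/- arXiv:2506.09960 — 4 statements merged into one kernel-verified Lean document; each statement's English description precedes it below -/
import Mathlib

section
/- Let d, N be natural numbers with 1 ≤ N ≤ d, let w ∈ [0,1], and let A and B be d×d complex Hermitian matrices, each positive semidefinite with all eigenvalues at most 1 and with trace A = trace B = N. Then for every k with 1 ≤ k ≤ d−1, the sum of the k largest eigenvalues (with multiplicity) of w·A + (1−w)·B is at least N − w·(N − (sum of the k largest eigenvalues of A)) − (1−w)·min(N, d−k). -/
open scoped ComplexOrder

/-- The sum of the `k` largest entries of `x : Fin d → ℝ`: the supremum over all
`k`-element index sets of the sum of the corresponding entries. -/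
noncomputable def sumKLargest {d : ℕ} (k : ℕ) (x : Fin d → ℝ) : ℝ :=
  sSup { y : ℝ | ∃ s : Finset (Fin d), s.card = k ∧ y = ∑ i ∈ s, x i }

/-!
Ky Fan's maximum principle: `S_k(M)` bounds `re tr (M Q)` for every `0 ≤ Q ≤ 1` with `tr Q = k`,
with equality at the spectral projection `P` of `M` onto its top `k` eigenvectors. Taking `P` for
`A` gives `S_k(w A + (1 - w) B) ≥ w S_k(A) + (1 - w) tr (B P)`, and `tr (B P) ≥ N - min N (d - k)`
because both `tr (B P)` and `tr ((1 - B) (1 - P))` are traces of products of positive semidefinite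
matrices, hence nonnegative.
-/

open Finset

def IsTopIndexSet {ι α : Type*} [LE α] (x : ι → α) (s : Finset ι) : Prop :=
  ∀ i ∈ s, ∀ j ∉ s, x j ≤ x i

theorem exists_isTopIndexSet {ι α : Type*} [Fintype ι] [LinearOrder α]
    (x : ι → α) {k : ℕ} (hk : k ≤ Fintype.card ι) :
    ∃ s : Finset ι, #s = k ∧ IsTopIndexSet x s := by
  classical
  induction k with
  | zero => exact ⟨∅, by simp, by simp [IsTopIndexSet]⟩
  | succ k ih =>
    obtain ⟨s, hs, htop⟩ := ih (by omega)
    have hne : sᶜ.Nonempty := by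
      rw [← card_pos, card_compl]; omega
    obtain ⟨j, hj, hjmax⟩ := exists_max_image sᶜ x hne
    refine ⟨insert j s, by rw [card_insert_of_notMem (mem_compl.mp hj), hs], ?_⟩
    intro i hi l hl
    rw [mem_insert, not_or] at hl
    rcases mem_insert.mp hi with rfl | hi
    · exact hjmax l (mem_compl.mpr hl.2)
    · exact htop i hi l hl.2

theorem IsTopIndexSet.sum_mul_le_sum {ι : Type*} [Fintype ι] {x t : ι → ℝ} {s : Finset ι}
    (htop : IsTopIndexSet x s) (hs : s.Nonempty)
    (ht0 : ∀ i, 0 ≤ t i) (ht1 : ∀ i, t i ≤ 1) (hts : ∑ i, t i = #s) :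
    ∑ i, x i * t i ≤ ∑ i ∈ s, x i := by
  classical
  -- compare both sides with the threshold `m = min_{i ∈ s} x i`
  set m := s.inf' hs x
  have hms : ∀ i ∈ s, m ≤ x i := fun i hi => inf'_le x hi
  have hout : ∀ j ∉ s, x j ≤ m := fun j hj => le_inf' hs x fun i hi => htop i hi j hj
  calc ∑ i, x i * t i = ∑ i ∈ s, x i * t i + ∑ i ∈ sᶜ, x i * t i :=
        (sum_add_sum_compl s _).symm
    _ ≤ ∑ i ∈ s, (x i + m * (t i - 1)) + ∑ i ∈ sᶜ, m * t i := by
        refine add_le_add (sum_le_sum fun i hi => ?_) (sum_le_sum fun j hj => ?_)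
        · nlinarith [hms i hi, ht1 i]
        · exact mul_le_mul_of_nonneg_right (hout j (mem_compl.mp hj)) (ht0 j)
    _ = ∑ i ∈ s, x i + m * (∑ i, t i - #s) := by
        rw [← sum_add_sum_compl s t, sum_add_distrib, ← mul_sum, ← mul_sum, sum_sub_distrib]
        simp only [sum_const, nsmul_eq_mul, mul_one]
        ring
    _ = ∑ i ∈ s, x i := by rw [hts, sub_self, mul_zero, add_zero]

section sumKLargest

variable {d k : ℕ} {x : Fin d → ℝ}

theorem le_sumKLargest {s : Finset (Fin d)} (hs : #s = k) : ∑ i ∈ s, x i ≤ sumKLargest k x := by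
  refine le_csSup ?_ ⟨s, hs, rfl⟩
  refine (Set.finite_range fun s : Finset (Fin d) => ∑ i ∈ s, x i).subset ?_ |>.bddAbove
  rintro y ⟨s, -, rfl⟩
  exact ⟨s, rfl⟩

theorem IsTopIndexSet.sumKLargest_eq_sum {s : Finset (Fin d)} (htop : IsTopIndexSet x s)
    (hk : 1 ≤ k) (hs : #s = k) : sumKLargest k x = ∑ i ∈ s, x i := by
  classical
  refine le_antisymm (csSup_le ⟨_, s, hs, rfl⟩ ?_) (le_sumKLargest hs)
  rintro y ⟨s', hs', rfl⟩
  have h := htop.sum_mul_le_sum (card_pos.mp (by omega))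
    (t := fun i => if i ∈ s' then 1 else 0) (fun i => by positivity)
    (fun i => by split_ifs <;> norm_num) (by simp [hs, hs'])
  simpa [mul_ite, sum_ite_mem] using h

theorem sum_mul_le_sumKLargest {t : Fin d → ℝ} (hk : 1 ≤ k) (ht0 : ∀ i, 0 ≤ t i)
    (ht1 : ∀ i, t i ≤ 1) (hts : ∑ i, t i = k) : ∑ i, x i * t i ≤ sumKLargest k x := by
  have hkd : k ≤ d := by
    have := sum_le_sum fun i (_ : i ∈ univ) => ht1 i
    simp only [hts, sum_const, card_univ, Fintype.card_fin, nsmul_eq_mul, mul_one] at this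
    exact_mod_cast this
  obtain ⟨s, hs, htop⟩ := exists_isTopIndexSet x (by simpa using hkd)
  rw [htop.sumKLargest_eq_sum hk hs]
  exact htop.sum_mul_le_sum (card_pos.mp (by omega)) ht0 ht1 (by rw [hts, hs])

end sumKLargest

namespace Matrix

variable {𝕜 : Type*} [RCLike 𝕜] {n : Type*}

theorem PosSemidef.re_diag_nonneg [Fintype n] {Q : Matrix n n 𝕜} (hQ : Q.PosSemidef) (i : n) :
    0 ≤ RCLike.re (Q i i) :=
  (RCLike.nonneg_iff.mp hQ.diag_nonneg).1

variable [Fintype n] [DecidableEq n]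

theorem IsHermitian.trace_mul_eq_sum_eigenvalues_mul {M : Matrix n n 𝕜} (hM : M.IsHermitian)
    (Q : Matrix n n 𝕜) :
    (M * Q).trace = ∑ i, (hM.eigenvalues i : 𝕜) *
      ((hM.eigenvectorUnitary : Matrix n n 𝕜)ᴴ * Q * hM.eigenvectorUnitary) i i := by
  conv_lhs => rw [hM.spectral_theorem, Unitary.conjStarAlgAut_apply,
    star_eq_conjTranspose]
  rw [Matrix.mul_assoc, trace_mul_comm, ← Matrix.mul_assoc]
  simp [trace, mul_diagonal, mul_comm]

theorem PosSemidef.one_sub_conjTranspose_mul_mul_same {Q : Matrix n n 𝕜}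
    (hQ1 : (1 - Q).PosSemidef) {U : Matrix n n 𝕜} (hU : Uᴴ * U = 1) :
    (1 - Uᴴ * Q * U).PosSemidef := by
  have h : 1 - Uᴴ * Q * U = Uᴴ * (1 - Q) * U := by
    rw [Matrix.mul_sub, Matrix.sub_mul, Matrix.mul_one, hU]
  rw [h]
  exact hQ1.conjTranspose_mul_mul_same U

theorem PosSemidef.re_diag_le_one {Q : Matrix n n 𝕜} (hQ1 : (1 - Q).PosSemidef) (i : n) :
    RCLike.re (Q i i) ≤ 1 := by
  simpa only [sub_apply, one_apply_eq, map_sub, RCLike.one_re, sub_nonneg] using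
    hQ1.re_diag_nonneg i

theorem PosSemidef.re_trace_mul_nonneg {M Q : Matrix n n 𝕜} (hM : M.PosSemidef)
    (hQ : Q.PosSemidef) : 0 ≤ RCLike.re (M * Q).trace := by
  rw [hM.isHermitian.trace_mul_eq_sum_eigenvalues_mul, map_sum]
  refine Finset.sum_nonneg fun i _ => ?_
  rw [RCLike.re_ofReal_mul]
  exact mul_nonneg (hM.eigenvalues_nonneg i)
    ((hQ.conjTranspose_mul_mul_same _).re_diag_nonneg i)

variable {d k : ℕ}

theorem IsHermitian.re_trace_mul_le_sumKLargest {M Q : Matrix (Fin d) (Fin d) 𝕜}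
    (hM : M.IsHermitian) (hQ : Q.PosSemidef) (hQ1 : (1 - Q).PosSemidef) (hk : 1 ≤ k)
    (htr : Q.trace = k) : RCLike.re (M * Q).trace ≤ sumKLargest k hM.eigenvalues := by
  set V : Matrix (Fin d) (Fin d) 𝕜 := ↑hM.eigenvectorUnitary
  have hV : Vᴴ * V = 1 := Unitary.coe_star_mul_self hM.eigenvectorUnitary
  have hV' : V * Vᴴ = 1 := Unitary.coe_mul_star_self hM.eigenvectorUnitary
  have htrV : RCLike.re (Vᴴ * Q * V).trace = k := by
    rw [trace_mul_comm, ← Matrix.mul_assoc, hV', Matrix.one_mul, htr, RCLike.natCast_re]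
  rw [hM.trace_mul_eq_sum_eigenvalues_mul, map_sum]
  simp only [RCLike.re_ofReal_mul]
  exact sum_mul_le_sumKLargest hk (hQ.conjTranspose_mul_mul_same V).re_diag_nonneg
    (hQ1.one_sub_conjTranspose_mul_mul_same hV).re_diag_le_one
    (by rw [← htrV, trace, map_sum]; rfl)

theorem IsHermitian.exists_re_trace_mul_eq_sumKLargest {M : Matrix (Fin d) (Fin d) 𝕜}
    (hM : M.IsHermitian) (hk : 1 ≤ k) (hkd : k ≤ d) :
    ∃ P : Matrix (Fin d) (Fin d) 𝕜, P.PosSemidef ∧ (1 - P).PosSemidef ∧ P.trace = k ∧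
      RCLike.re (M * P).trace = sumKLargest k hM.eigenvalues := by
  classical
  obtain ⟨s, hs, htop⟩ := exists_isTopIndexSet hM.eigenvalues (by simpa using hkd)
  set V : Matrix (Fin d) (Fin d) 𝕜 := ↑hM.eigenvectorUnitary
  have hV : Vᴴ * V = 1 := Unitary.coe_star_mul_self hM.eigenvectorUnitary
  have hV' : V * Vᴴ = 1 := Unitary.coe_mul_star_self hM.eigenvectorUnitary
  -- `V * D * Vᴴ` is the orthogonal projection onto the eigenvectors of the `k` largest eigenvalues
  set D : Matrix (Fin d) (Fin d) 𝕜 := diagonal fun i => if i ∈ s then 1 else 0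
  have hD : D.PosSemidef :=
    posSemidef_diagonal_iff.mpr fun i => by split_ifs <;> simp
  have hD1 : (1 - D).PosSemidef := by
    rw [← diagonal_one, diagonal_sub]
    exact posSemidef_diagonal_iff.mpr fun i => by split_ifs <;> simp
  refine ⟨V * D * Vᴴ, hD.mul_mul_conjTranspose_same V, ?_, ?_, ?_⟩
  · simpa using hD1.one_sub_conjTranspose_mul_mul_same (U := Vᴴ) (by simpa using hV')
  · rw [trace_mul_cycle, hV, Matrix.one_mul, trace_diagonal]
    simp [hs]
  · have hVPV : Vᴴ * (V * D * Vᴴ) * V = D := by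
      simp only [← Matrix.mul_assoc, hV, Matrix.one_mul]
      rw [Matrix.mul_assoc, hV, Matrix.mul_one]
    rw [hM.trace_mul_eq_sum_eigenvalues_mul, hVPV, htop.sumKLargest_eq_sum hk hs, map_sum]
    simp [D, apply_ite RCLike.re, Finset.sum_ite_mem]

theorem PosSemidef.sub_min_le_re_trace_mul {B P : Matrix n n 𝕜} (hB : B.PosSemidef)
    (hB1 : (1 - B).PosSemidef) (hP : P.PosSemidef) (hP1 : (1 - P).PosSemidef) {a b : ℝ}
    (ha : B.trace = a) (hb : P.trace = b) :
    a - min a (Fintype.card n - b) ≤ RCLike.re (B * P).trace := by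
  have hBP := hB.re_trace_mul_nonneg hP
  -- `0 ≤ tr ((1 - B) (1 - P)) = card n - b - a + tr (B P)`
  have hBP' := hB1.re_trace_mul_nonneg hP1
  rw [Matrix.sub_mul, Matrix.mul_sub, Matrix.mul_sub, Matrix.one_mul, Matrix.mul_one,
    Matrix.one_mul, trace_sub, trace_sub, trace_sub, trace_one, ha, hb] at hBP'
  simp only [map_sub, RCLike.natCast_re, RCLike.ofReal_re] at hBP'
  rw [sub_le_comm]
  exact le_min (by linarith) (by linarith)

end Matrix

theorem sum_k_largest_eigenvalues_convex_comb_lower_bound_general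
    (d N : ℕ) (w : ℝ) (hw : w ∈ Set.Icc (0 : ℝ) 1)
    (A B : Matrix (Fin d) (Fin d) ℂ)
    (hA : A.PosSemidef)
    (hB : B.PosSemidef) (hB1 : (1 - B).PosSemidef) (htrB : B.trace = (N : ℂ))
    (hγ : (w • A + (1 - w) • B).IsHermitian) :
    ∀ k : ℕ, 1 ≤ k → k ≤ d - 1 →
      sumKLargest k hγ.eigenvalues ≥
        (N : ℝ) - w * ((N : ℝ) - sumKLargest k hA.isHermitian.eigenvalues)
          - (1 - w) * min (N : ℝ) ((d : ℝ) - (k : ℝ)) := by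
  intro k hk hkd
  obtain ⟨P, hP, hP1, htrP, hAP⟩ :=
    hA.isHermitian.exists_re_trace_mul_eq_sumKLargest hk (by omega)
  have hγP := hγ.re_trace_mul_le_sumKLargest hP hP1 hk htrP
  have hBP := hB.sub_min_le_re_trace_mul hB1 hP hP1 (a := N) (b := k) (by simpa using htrB)
    (by simpa using htrP)
  rw [Fintype.card_fin] at hBP
  have hsplit : RCLike.re ((w • A + (1 - w) • B) * P).trace =
      w * RCLike.re (A * P).trace + (1 - w) * RCLike.re (B * P).trace := by
    simp [Matrix.add_mul, Matrix.trace_add]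
  rw [hsplit, hAP] at hγP
  have hBPw := mul_le_mul_of_nonneg_left hBP (sub_nonneg.mpr hw.2)
  linarith

/-- lower bound on the sum of the `k` largest eigenvalues of
`w·A + (1−w)·B` where `A`, `B` are Hermitian, satisfy the Coleman conditions
(`0 ≤ A, B ≤ 1`, trace `= N`). -/
theorem sum_k_largest_eigenvalues_convex_comb_lower_bound
    (d N : ℕ) (hN : 1 ≤ N) (hNd : N ≤ d) (w : ℝ) (hw : w ∈ Set.Icc (0 : ℝ) 1)
    (A B : Matrix (Fin d) (Fin d) ℂ)
    (hA : A.PosSemidef) (hA1 : (1 - A).PosSemidef) (htrA : A.trace = (N : ℂ))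
    (hB : B.PosSemidef) (hB1 : (1 - B).PosSemidef) (htrB : B.trace = (N : ℂ))
    (hγ : (w • A + (1 - w) • B).IsHermitian) :
    ∀ k : ℕ, 1 ≤ k → k ≤ d - 1 →
      sumKLargest k hγ.eigenvalues ≥
        (N : ℝ) - w * ((N : ℝ) - sumKLargest k hA.isHermitian.eigenvalues)
          - (1 - w) * min (N : ℝ) ((d : ℝ) - (k : ℝ)) :=
  sum_k_largest_eigenvalues_convex_comb_lower_bound_general d N w hw A B hA hB hB1 htrB hγ
end

section
/- Let w ∈ [0,1] and let a, μ, λ ∈ ℝ³ satisfy: 1 ≥ a₁ ≥ a₂ ≥ a₃ ≥ 0 with a₁+a₂+a₃ = 2; 1 ≥ μ₁ ≥ μ₂ ≥ μ₃ ≥ 0 with μ₁+μ₂+μ₃ = 2; λ₁ ≥ λ₂ ≥ λ₃; and the twelve Horn inequalities: λ₁ ≤ w·a₁+(1−w)·μ₁, λ₂ ≤ w·a₁+(1−w)·μ₂, λ₂ ≤ w·a₂+(1−w)·μ₁, λ₃ ≤ w·a₁+(1−w)·μ₃, λ₃ ≤ w·a₃+(1−w)·μ₁, λ₃ ≤ w·a₂+(1−w)·μ₂,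 λ₁+λ₂ ≤ w·(a₁+a₂)+(1−w)·(μ₁+μ₂), λ₁+λ₃ ≤ w·(a₁+a₃)+(1−w)·(μ₁+μ₂), λ₂+λ₃ ≤ w·(a₂+a₃)+(1−w)·(μ₁+μ₂), λ₁+λ₃ ≤ w·(a₁+a₂)+(1−w)·(μ₁+μ₃), λ₂+λ₃ ≤ w·(a₁+a₂)+(1−w)·(μ₂+μ₃), λ₂+λ₃ ≤ w·(a₁+a₃)+(1−w)·(μ₁+μ₃). Then λ satisfies the seven inequalities: λ₁ ≤ w·a₁+(1−w), λ₂ ≤ w·a₂+(1−w), λ₃ ≤ w·a₁+2(1−w)/3, λ₃ ≤ w·a₃+(1−w), λ₁+λ₃ ≤ w·(a₁+a₂)+3(1−w)/2, λ₂+λ₃ ≤ w·(a₁+a₂)+4(1−w)/3, λ₂+λ₃ ≤ w·(a₁+a₃)+3(1−w)/2. -/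
/-- for `d = 3`, `N = 2`, the twelve Horn inequalities for
`λ ∈ spec(w·γ⁽¹⁾ + (1−w)·γ⁽²⁾)`, with `a = λ⁽¹⁾` fixed and `μ = λ⁽²⁾` ranging
over the Pauli simplex, imply the seven refined inequalities of Eq. (app-cons). -/
theorem horn_d3_refined_constraints
    (w a₁ a₂ a₃ μ₁ μ₂ μ₃ l₁ l₂ l₃ : ℝ)
    (hw : w ∈ Set.Icc (0 : ℝ) 1)
    (ha : 1 ≥ a₁ ∧ a₁ ≥ a₂ ∧ a₂ ≥ a₃ ∧ a₃ ≥ 0) (hasum : a₁ + a₂ + a₃ = 2)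
    (hμ : 1 ≥ μ₁ ∧ μ₁ ≥ μ₂ ∧ μ₂ ≥ μ₃ ∧ μ₃ ≥ 0) (hμsum : μ₁ + μ₂ + μ₃ = 2)
    (hl : l₁ ≥ l₂ ∧ l₂ ≥ l₃)
    (h1 : l₁ ≤ w * a₁ + (1 - w) * μ₁)
    (h2 : l₂ ≤ w * a₁ + (1 - w) * μ₂)
    (h3 : l₂ ≤ w * a₂ + (1 - w) * μ₁)
    (h4 : l₃ ≤ w * a₁ + (1 - w) * μ₃)
    (h5 : l₃ ≤ w * a₃ + (1 - w) * μ₁)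
    (h6 : l₃ ≤ w * a₂ + (1 - w) * μ₂)
    (h7 : l₁ + l₂ ≤ w * (a₁ + a₂) + (1 - w) * (μ₁ + μ₂))
    (h8 : l₁ + l₃ ≤ w * (a₁ + a₃) + (1 - w) * (μ₁ + μ₂))
    (h9 : l₂ + l₃ ≤ w * (a₂ + a₃) + (1 - w) * (μ₁ + μ₂))
    (h10 : l₁ + l₃ ≤ w * (a₁ + a₂) + (1 - w) * (μ₁ + μ₃))
    (h11 : l₂ + l₃ ≤ w * (a₁ + a₂) + (1 - w) * (μ₂ + μ₃))
    (h12 : l₂ + l₃ ≤ w * (a₁ + a₃) + (1 - w) * (μ₁ + μ₃)) :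
    l₁ ≤ w * a₁ + (1 - w) ∧
    l₂ ≤ w * a₂ + (1 - w) ∧
    l₃ ≤ w * a₁ + 2 * (1 - w) / 3 ∧
    l₃ ≤ w * a₃ + (1 - w) ∧
    l₁ + l₃ ≤ w * (a₁ + a₂) + 3 * (1 - w) / 2 ∧
    l₂ + l₃ ≤ w * (a₁ + a₂) + 4 * (1 - w) / 3 ∧
    l₂ + l₃ ≤ w * (a₁ + a₃) + 3 * (1 - w) / 2 := by
  obtain ⟨hw0, hw1⟩ := hw
  obtain ⟨hμ1, hμ12, hμ23, hμ3⟩ := hμ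
  have hwn : (0:ℝ) ≤ 1 - w := by linarith
  have b3 : μ₃ ≤ 2/3 := by linarith
  have b13 : μ₁ + μ₃ ≤ 3/2 := by linarith
  have b23 : μ₂ + μ₃ ≤ 4/3 := by linarith
  have k1 : (1 - w) * μ₁ ≤ (1 - w) * 1 := mul_le_mul_of_nonneg_left hμ1 hwn
  have k3 : (1 - w) * μ₃ ≤ (1 - w) * (2/3) := mul_le_mul_of_nonneg_left b3 hwn
  have k13 : (1 - w) * (μ₁ + μ₃) ≤ (1 - w) * (3/2) := mul_le_mul_of_nonneg_left b13 hwn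
  have k23 : (1 - w) * (μ₂ + μ₃) ≤ (1 - w) * (4/3) := mul_le_mul_of_nonneg_left b23 hwn
  refine ⟨by linarith, by linarith, by linarith, by linarith, by linarith, by linarith, by linarith⟩
end

section
/- Let d, N be natural numbers with 1 ≤ N ≤ d−1, let w ∈ [0,1], and let a ∈ ℝ^d be decreasing with 0 ≤ a_i ≤ 1 for all i and ∑_{i=1}^d a_i = N. Define ṽ ∈ ℝ^d by: ṽ_i = w·a_i + (1−w) for 1 ≤ i ≤ N−1; ṽ_N = min( w·a_N + (1−w), N−1+w − ∑_{j=1}^{N−1} ṽ_j ); x̃ = w·a_N + (1−w) − ṽ_N; ṽ_{N+1} = w·a_{N+1} + x̃; and ṽ_i = w·a_i for N+2 ≤ i ≤ d. Then ∑_{i=1}^d ṽ_i = N, and for every k with 1 ≤ k ≤ d−1 one has ∑_{i=1}^k ṽ_i = Ω(w,k,N,a), where Ω(w,k,N,a) = w·∑_{i=1}^k a_i + (1−w)·min(k,N) if k ≠ N, and Ω(w,N,N,a) = min( N−1+w, w·∑_{i=1}^N a_i + (1−w)·N ). -/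
/-- Extension of `a : Fin d → ℝ` to `ℕ` by zero, so that `extendV a j` is the
`(j+1)`-st entry of `a` (0-indexed `j`). -/
noncomputable def extendV {d : ℕ} (a : Fin d → ℝ) (j : ℕ) : ℝ :=
  if h : j < d then a ⟨j, h⟩ else 0

/-- The sum of the first `k` entries of `x : Fin d → ℝ` (entries with index `< k`). -/
noncomputable def partialSum {d : ℕ} (k : ℕ) (x : Fin d → ℝ) : ℝ :=
  ∑ i ∈ Finset.univ.filter (fun i : Fin d => (i : ℕ) < k), x i

/-- The `N`-th entry (1-indexed) `ṽ_N = min(w·a_N + (1−w), N−1+w − ∑_{j=1}^{N−1} ṽ_j)`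
of the generating vertex, where `ṽ_j = w·a_j + (1−w)` for `j ≤ N−1`. -/
noncomputable def vtildeN (d N : ℕ) (w : ℝ) (a : Fin d → ℝ) : ℝ :=
  min (w * extendV a (N - 1) + (1 - w))
    ((N : ℝ) - 1 + w - partialSum (N - 1) (fun i => w * a i + (1 - w)))

/-- `x̃ = w·a_N + (1−w) − ṽ_N`. -/
noncomputable def xtilde (d N : ℕ) (w : ℝ) (a : Fin d → ℝ) : ℝ :=
  w * extendV a (N - 1) + (1 - w) - vtildeN d N w a

/-- The generating vertex `ṽ` of the spectral polytope `Σ(w, a)`: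
`ṽ_i = w·a_i + (1−w)` for `1 ≤ i ≤ N−1` (0-indexed `i < N−1`), `ṽ_N` as above,
`ṽ_{N+1} = w·a_{N+1} + x̃`, and `ṽ_i = w·a_i` for `i ≥ N+2`. -/
noncomputable def vtilde (d N : ℕ) (w : ℝ) (a : Fin d → ℝ) : Fin d → ℝ := fun i =>
  if (i : ℕ) < N - 1 then w * a i + (1 - w)
  else if (i : ℕ) = N - 1 then vtildeN d N w a
  else if (i : ℕ) = N then w * a i + xtilde d N w a
  else w * a i

/-- `Ω(w,k,N,a)`: the upper bound on the sum of the `k` largest natural occupation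
numbers from Eq. (sum-r2-ub). -/
noncomputable def Omega (d N k : ℕ) (w : ℝ) (a : Fin d → ℝ) : ℝ :=
  if k = N then
    min ((N : ℝ) - 1 + w) (w * partialSum N a + (1 - w) * (N : ℝ))
  else
    w * partialSum k a + (1 - w) * min (k : ℝ) (N : ℝ)

lemma partialSum_zero {d : ℕ} (x : Fin d → ℝ) : partialSum 0 x = 0 := by
  simp [partialSum]

lemma partialSum_succ {d : ℕ} (x : Fin d → ℝ) {k : ℕ} (h : k < d) :
    partialSum (k + 1) x = partialSum k x + x ⟨k, h⟩ := by
  unfold partialSum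
  have hset : (Finset.univ.filter fun i : Fin d => (i : ℕ) < k + 1)
      = insert ⟨k, h⟩ (Finset.univ.filter fun i : Fin d => (i : ℕ) < k) := by
    ext i
    simp [Fin.ext_iff]
    omega
  rw [hset, Finset.sum_insert (by simp)]
  ring

lemma partialSum_univ {d : ℕ} (x : Fin d → ℝ) : partialSum d x = ∑ i, x i := by
  unfold partialSum
  rw [Finset.filter_true_of_mem (fun i _ => i.isLt)]

lemma partialSum_affine {d : ℕ} (w c : ℝ) (a : Fin d → ℝ) {k : ℕ} (hk : k ≤ d) :
    partialSum k (fun i => w * a i + c) = w * partialSum k a + c * k := by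
  induction k with
  | zero => simp [partialSum_zero]
  | succ n ih =>
    have hn : n < d := hk
    rw [partialSum_succ _ hn, partialSum_succ a hn, ih (le_of_lt hn)]
    push_cast
    ring

/-- the generating vertex `ṽ` sums to `N`, and its partial sums
saturate the bounds `Ω(w,k,N,a)`. -/
theorem vtilde_partial_sums
    (d N : ℕ) (hN : 1 ≤ N) (hd : N + 1 ≤ d) (w : ℝ) (hw : w ∈ Set.Icc (0 : ℝ) 1)
    (a : Fin d → ℝ) (ha : Antitone a)
    (ha01 : ∀ i, a i ∈ Set.Icc (0 : ℝ) 1) (hasum : ∑ i, a i = (N : ℝ)) :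
    (∑ i, vtilde d N w a i = (N : ℝ)) ∧
    (∀ k : ℕ, 1 ≤ k → k ≤ d - 1 →
      partialSum k (vtilde d N w a) = Omega d N k w a) := by
  set v := vtilde d N w a with hv
  have hNd : N < d := hd
  have hN1d : N - 1 < d := lt_of_le_of_lt (Nat.sub_le N 1) hNd
  have hcastN1 : ((N - 1 : ℕ) : ℝ) = (N : ℝ) - 1 := by
    rw [Nat.cast_sub hN]; norm_num
  have hext : extendV a (N - 1) = a ⟨N - 1, hN1d⟩ := by
    simp [extendV, hN1d]
  -- component values
  have hvN1 : v ⟨N - 1, hN1d⟩ = vtildeN d N w a := by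
    simp only [hv, vtilde]
    simp
  have hvN : v ⟨N, hNd⟩ = w * a ⟨N, hNd⟩ + xtilde d N w a := by
    have h1 : ¬ N < N - 1 := by omega
    have h2 : N ≠ N - 1 := by omega
    simp only [hv, vtilde]
    simp [h1, h2]

  -- partial sums for k ≤ N-1
  have hS : ∀ k, k ≤ N - 1 → partialSum k v = w * partialSum k a + (1 - w) * k := by
    intro k hk
    have hcong : partialSum k v = partialSum k (fun i => w * a i + (1 - w)) := by
      unfold partialSum
      refine Finset.sum_congr rfl (fun i hi => ?_)
      rw [Finset.mem_filter] at hi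
      simp only [hv, vtilde]
      rw [if_pos (lt_of_lt_of_le hi.2 hk)]
    rw [hcong, partialSum_affine w (1 - w) a (le_trans hk (le_of_lt hN1d))]
  -- partial sum at N
  have hSN1v : partialSum (N - 1) v + v ⟨N - 1, hN1d⟩ = partialSum N v := by
    have := partialSum_succ v hN1d
    rw [Nat.sub_add_cancel hN] at this
    linarith
  have hSN1a : partialSum (N - 1) a + a ⟨N - 1, hN1d⟩ = partialSum N a := by
    have := partialSum_succ a hN1d
    rw [Nat.sub_add_cancel hN] at this
    linarith
  have hvtN : vtildeN d N w a = min (w * a ⟨N - 1, hN1d⟩ + (1 - w))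
      ((N : ℝ) - 1 + w - (w * partialSum (N - 1) a + (1 - w) * ((N - 1 : ℕ) : ℝ))) := by
    unfold vtildeN
    rw [hext, partialSum_affine w (1 - w) a (le_of_lt hN1d)]
  have hSN : partialSum N v
      = min ((N : ℝ) - 1 + w) (w * partialSum N a + (1 - w) * (N : ℝ)) := by
    rw [← hSN1v, hvN1, hS (N - 1) le_rfl, hvtN]
    rw [← min_add_add_left]
    rw [min_comm]
    congr 1
    · ring
    · rw [← hSN1a, hcastN1]
      ring
  -- partial sum at N+1
  have hSsucc : partialSum (N + 1) v = w * partialSum (N + 1) a + (1 - w) * N := by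
    rw [partialSum_succ v hNd, partialSum_succ a hNd, ← hSN1v, ← hSN1a,
      hS (N - 1) le_rfl, hvN1, hvN]
    unfold xtilde
    rw [hext, hcastN1]
    ring
  -- partial sums for k ≥ N+1
  have hSge : ∀ k, N + 1 ≤ k → k ≤ d → partialSum k v = w * partialSum k a + (1 - w) * N := by
    intro k hk1
    induction k, hk1 using Nat.le_induction with
    | base => intro _; exact hSsucc
    | succ n hn ih =>
      intro hnd
      have hnd' : n < d := hnd
      have hvn : v ⟨n, hnd'⟩ = w * a ⟨n, hnd'⟩ := by
        simp only [hv, vtilde]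
        rw [if_neg (by omega), if_neg (by omega), if_neg (by omega)]
      rw [partialSum_succ v hnd', partialSum_succ a hnd', ih (le_of_lt hnd'), hvn]
      ring
  constructor
  · have := hSge d hd le_rfl
    rw [partialSum_univ, partialSum_univ, hasum] at this
    rw [this]; ring
  · intro k hk1 hk2
    have hkd : k < d := by omega
    rcases lt_trichotomy k N with hlt | heq | hgt
    · have hk : k ≤ N - 1 := by omega
      rw [hS k hk]
      unfold Omega
      rw [if_neg (Nat.ne_of_lt hlt), min_eq_left (by exact_mod_cast le_of_lt hlt)]
    · subst heq
      rw [hSN]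
      unfold Omega
      rw [if_pos rfl]
    · rw [hSge k (by omega) (le_of_lt hkd)]
      unfold Omega
      rw [if_neg (Nat.ne_of_gt hgt), min_eq_right (by exact_mod_cast le_of_lt hgt)]
end

section
/- Let d, N be natural numbers with 1 ≤ N ≤ d−1, let w ∈ [0,1], and let a ∈ ℝ^d be decreasing with 0 ≤ a_i ≤ 1 for all i and ∑_{i=1}^d a_i = N. Let v^HF ∈ ℝ^d be the vector whose first N entries are 1 and whose remaining entries are 0, let P_a be the permutohedron generated by a, and let P_HF be the permutohedron generated by v^HF. Then { λ ∈ ℝ^d : ∑_{i=1}^d λ_i = N and for every k with 1 ≤ k ≤ d−1 the sum of the k largest entries of λ is at most Ω(w,k,N,a) } = Σ(w) ∩ ( w·P_a + (1−w)·P_HF ), where Σ(w) = { λ ∈ ℝ^d : ∑_{i=1}^d λ_i = N, the sum of the k largest entries of λ is at most k for 1 ≤ k ≤ N−1, at most N−1+w for k = N, and at most N for N+1 ≤ k ≤ d−1 }, w·P_a denotes the scalar dilation of the set P_a, and the sum of sets is the Minkowski sum. -/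
open scoped Pointwise

/-- The permutohedron generated by `v`: the convex hull of all entry-permutations
of `v`. -/
noncomputable def permutohedron {d : ℕ} (v : Fin d → ℝ) : Set (Fin d → ℝ) :=
  convexHull ℝ { x : Fin d → ℝ | ∃ σ : Equiv.Perm (Fin d), x = v ∘ σ }

/-!
A point lies in the permutohedron of a decreasing vector `v` iff it has the same total as `v` and
is majorized by it: the sum of its `k` largest entries is at most the `k`-th partial sum of `v`
(Rado). Necessity holds because `sumKLargest k` is convex and permutation invariant. For
sufficiency, separate a non-member `x` from the permutohedron by a linear functional `c`; after
sorting `c` and `x`, the rearrangement inequality and summation by parts produce a vertex `v ∘ σ`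
whose `c`-value is at least that of `x`.

Majorization adds up over decreasing vectors, so `w • P_a + (1 - w) • P_HF` is the permutohedron
of `b = w • a + (1 - w) • v^HF`. The partial sums of `b` are at most `min k N`, so the bounds of
`Σ(w)` for `k ≠ N` follow from majorization by `b`, while `Ω(w,k,N,a)` is the `k`-th partial sum
of `b`, capped by `N - 1 + w` when `k = N`.
-/

open Finset

variable {d : ℕ}

section SumKLargest

theorem sum_le_sumKLargest (x : Fin d → ℝ) {k : ℕ} {s : Finset (Fin d)} (hs : #s = k) :
    ∑ i ∈ s, x i ≤ sumKLargest k x :=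
  le_csSup ((Set.finite_range fun s : Finset (Fin d) => ∑ i ∈ s, x i).subset
    (by rintro _ ⟨s, -, rfl⟩; exact ⟨s, rfl⟩)).bddAbove ⟨s, hs, rfl⟩

theorem sumKLargest_le {k : ℕ} (hk : k ≤ d) {x : Fin d → ℝ} {C : ℝ}
    (h : ∀ s : Finset (Fin d), #s = k → ∑ i ∈ s, x i ≤ C) : sumKLargest k x ≤ C := by
  obtain ⟨s, -, hs⟩ :=
    exists_subset_card_eq (s := (univ : Finset (Fin d))) (n := k) (by simpa using hk)
  exact csSup_le ⟨_, s, hs, rfl⟩ (by rintro _ ⟨s, hs, rfl⟩; exact h s hs)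

theorem sumKLargest_add_le {k : ℕ} (hk : k ≤ d) (x y : Fin d → ℝ) :
    sumKLargest k (x + y) ≤ sumKLargest k x + sumKLargest k y :=
  sumKLargest_le hk fun s hs => by
    simpa only [Pi.add_apply, sum_add_distrib] using
      add_le_add (sum_le_sumKLargest x hs) (sum_le_sumKLargest y hs)

theorem sumKLargest_smul {c : ℝ} (hc : 0 ≤ c) (k : ℕ) (x : Fin d → ℝ) :
    sumKLargest k (c • x) = c * sumKLargest k x := by
  rw [sumKLargest, sumKLargest, ← smul_eq_mul, ← Real.sSup_smul_of_nonneg hc]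
  congr 1
  ext y
  simp [Set.mem_smul_set, mul_sum, eq_comm]

theorem convexOn_sumKLargest {k : ℕ} (hk : k ≤ d) :
    ConvexOn ℝ Set.univ (sumKLargest (d := d) k) :=
  ⟨convex_univ, fun x _ y _ a b ha hb _ => by
    simpa only [sumKLargest_smul ha, sumKLargest_smul hb, smul_eq_mul] using
      sumKLargest_add_le hk (a • x) (b • y)⟩

theorem sumKLargest_comp_perm (k : ℕ) (x : Fin d → ℝ) (σ : Equiv.Perm (Fin d)) :
    sumKLargest k (x ∘ σ) = sumKLargest k x := by
  unfold sumKLargest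
  congr 1
  ext y
  constructor <;> rintro ⟨s, hs, rfl⟩
  · exact ⟨s.map σ.toEmbedding, by simpa using hs, by simp [sum_map]⟩
  · exact ⟨s.map σ.symm.toEmbedding, by simpa using hs, by simp [sum_map]⟩

end SumKLargest

section PartialSum

theorem partialSum_add (k : ℕ) (x y : Fin d → ℝ) :
    partialSum k (x + y) = partialSum k x + partialSum k y :=
  sum_add_distrib

theorem partialSum_sub (k : ℕ) (x y : Fin d → ℝ) :
    partialSum k (x - y) = partialSum k x - partialSum k y :=
  sum_sub_distrib _ _

theorem partialSum_smul (c : ℝ) (k : ℕ) (x : Fin d → ℝ) :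
    partialSum k (c • x) = c * partialSum k x := by
  simp [partialSum, mul_sum]

theorem partialSum_self (x : Fin d → ℝ) : partialSum d x = ∑ i, x i := by
  simp [partialSum]

theorem card_filter_val_lt_of_le {k : ℕ} (hk : k ≤ d) : #{i : Fin d | (i : ℕ) < k} = k := by
  rw [Fin.card_filter_val_lt, min_eq_right hk]

theorem extend_val_apply (x : Fin d → ℝ) {i : ℕ} (hi : i < d) :
    Function.extend Fin.val x 0 i = x ⟨i, hi⟩ :=
  Fin.val_injective.extend_apply x 0 ⟨i, hi⟩

theorem partialSum_eq_sum_range {k : ℕ} (hk : k ≤ d) (x : Fin d → ℝ) :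
    partialSum k x = ∑ i ∈ range k, Function.extend Fin.val x 0 i := by
  have hrange : (range d).filter (· < k) = range k := by
    ext i; simp only [mem_filter, mem_range]; omega
  rw [partialSum, sum_filter, ← hrange, sum_filter, ← Fin.sum_univ_eq_sum_range]
  simp [extend_val_apply]

theorem Fin.val_le_of_strictMono {k : ℕ} {f : Fin k → Fin d} (hf : StrictMono f) (j : Fin k) :
    (j : ℕ) ≤ f j := by
  obtain ⟨j, hj⟩ := j
  induction j with
  | zero => exact Nat.zero_le _
  | succ j ih =>
    have := hf (show (⟨j, by omega⟩ : Fin k) < ⟨j + 1, hj⟩ from Nat.lt_succ_self j)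
    exact Nat.succ_le_of_lt ((ih (by omega)).trans_lt this)

theorem sumKLargest_eq_partialSum {k : ℕ} (hk : k ≤ d) {v : Fin d → ℝ} (hv : Antitone v) :
    sumKLargest k v = partialSum k v := by
  refine le_antisymm (sumKLargest_le hk fun s hs => ?_)
    (sum_le_sumKLargest v (card_filter_val_lt_of_le hk))
  let e := s.orderIsoOfFin hs
  calc ∑ i ∈ s, v i = ∑ j : Fin k, v (e j) := (sum_coe_sort s v).symm.trans
        (Equiv.sum_comp e.toEquiv (fun i : s => v i)).symm
    _ ≤ ∑ j : Fin k, v (Fin.castLE hk j) :=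
        sum_le_sum fun j _ => hv (Fin.val_le_of_strictMono (s.orderEmbOfFin hs).strictMono j)
    _ = partialSum k v := by
        rw [partialSum_eq_sum_range hk, ← Fin.sum_univ_eq_sum_range]
        exact sum_congr rfl fun j _ => (extend_val_apply v (j.2.trans_le hk)).symm

end PartialSum

section Permutohedron

theorem permutohedron_eq_convexHull_range (v : Fin d → ℝ) :
    permutohedron v = convexHull ℝ (Set.range fun σ : Equiv.Perm (Fin d) => v ∘ σ) := by
  simp only [permutohedron, Set.range, eq_comm]

theorem comp_perm_mem_permutohedron (v : Fin d → ℝ) (σ : Equiv.Perm (Fin d)) :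
    v ∘ σ ∈ permutohedron v :=
  subset_convexHull ℝ _ ⟨σ, rfl⟩

theorem isCompact_permutohedron (v : Fin d → ℝ) : IsCompact (permutohedron v) := by
  rw [permutohedron_eq_convexHull_range]
  exact (Set.finite_range _).isCompact_convexHull ℝ

theorem permutohedron_smul (c : ℝ) (v : Fin d → ℝ) :
    permutohedron (c • v) = c • permutohedron v := by
  simp only [permutohedron_eq_convexHull_range, ← convexHull_smul, ← Set.range_smul]
  rfl

theorem permutohedron_add_subset (a b : Fin d → ℝ) :
    permutohedron (a + b) ⊆ permutohedron a + permutohedron b := by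
  simp only [permutohedron_eq_convexHull_range, ← convexHull_add]
  exact convexHull_mono <| Set.range_subset_iff.2 fun σ => Set.add_mem_add ⟨σ, rfl⟩ ⟨σ, rfl⟩

theorem sum_eq_of_mem_permutohedron {v x : Fin d → ℝ} (hx : x ∈ permutohedron v) :
    ∑ i, x i = ∑ i, v i := by
  refine convexHull_min ?_ (convex_hyperplane ?_ _) hx
  · rintro _ ⟨σ, rfl⟩
    exact Equiv.sum_comp σ v
  · exact ⟨fun x y => sum_add_distrib, fun c x => by simp [mul_sum]⟩

theorem sumKLargest_le_of_mem_permutohedron {v x : Fin d → ℝ} (hv : Antitone v) {k : ℕ}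
    (hk : k ≤ d) (hx : x ∈ permutohedron v) : sumKLargest k x ≤ partialSum k v := by
  refine convexHull_min ?_ ((convexOn_sumKLargest hk).convex_le _) hx |>.2
  rintro _ ⟨σ, rfl⟩
  exact ⟨trivial, (sumKLargest_comp_perm k v σ).trans_le (sumKLargest_eq_partialSum hk hv).le⟩

end Permutohedron

section Rado

theorem sum_range_mul_nonpos_of_partial_sums_nonpos {f e : ℕ → ℝ} {n : ℕ}
    (hf : ∀ i, i + 1 < n → f (i + 1) ≤ f i) (he : ∀ k < n, ∑ i ∈ range k, e i ≤ 0)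
    (htot : ∑ i ∈ range n, e i = 0) : ∑ i ∈ range n, f i * e i ≤ 0 := by
  have hparts := sum_range_by_parts f e n
  simp only [smul_eq_mul] at hparts
  rw [hparts, htot, mul_zero, zero_sub, neg_nonpos]
  refine sum_nonneg fun i hi => ?_
  have hi : i + 1 < n := by rw [mem_range] at hi; omega
  exact mul_nonneg_of_nonpos_of_nonpos (sub_nonpos.2 (hf i hi)) (he (i + 1) hi)

theorem sum_mul_le_sum_mul_of_partialSum_le {c g v : Fin d → ℝ} (hc : Antitone c)
    (hpart : ∀ k, 1 ≤ k → k ≤ d - 1 → partialSum k g ≤ partialSum k v)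
    (hsum : ∑ i, g i = ∑ i, v i) : ∑ i, c i * g i ≤ ∑ i, c i * v i := by
  have he : ∀ k ≤ d, ∑ i ∈ range k, Function.extend Fin.val (g - v) 0 i =
      partialSum k g - partialSum k v := fun k hk => by
    rw [← partialSum_sub, partialSum_eq_sum_range hk]
  have key := sum_range_mul_nonpos_of_partial_sums_nonpos
    (f := Function.extend Fin.val c 0) (e := Function.extend Fin.val (g - v) 0) (n := d)
    (fun i hi => by
      rw [extend_val_apply c hi, extend_val_apply c (by omega)]
      exact hc (Nat.le_succ i))
    (fun k hk => by
      rcases Nat.eq_zero_or_pos k with rfl | hk0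
      · simp
      · rw [he k hk.le, sub_nonpos]; exact hpart k hk0 (by omega))
    (by rw [he d le_rfl, partialSum_self, partialSum_self, hsum, sub_self])
  rw [← Fin.sum_univ_eq_sum_range (fun i => Function.extend Fin.val c 0 i *
    Function.extend Fin.val (g - v) 0 i)] at key
  simp only [Fin.val_injective.extend_apply, Pi.sub_apply, mul_sub, sum_sub_distrib,
    sub_nonpos] at key
  exact key

theorem exists_antitone_comp_perm (x : Fin d → ℝ) : ∃ σ : Equiv.Perm (Fin d), Antitone (x ∘ σ) :=
  ⟨Tuple.sort (-x), fun _ _ hij => neg_le_neg_iff.1 (Tuple.monotone_sort (-x) hij)⟩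

theorem exists_perm_sum_mul_le {v x : Fin d → ℝ} (hsum : ∑ i, x i = ∑ i, v i)
    (hmaj : ∀ k, 1 ≤ k → k ≤ d - 1 → sumKLargest k x ≤ partialSum k v) (c : Fin d → ℝ) :
    ∃ σ : Equiv.Perm (Fin d), ∑ i, c i * x i ≤ ∑ i, c i * (v ∘ σ) i := by
  obtain ⟨τ, hτ⟩ := exists_antitone_comp_perm c
  obtain ⟨ρ, hρ⟩ := exists_antitone_comp_perm x
  have hmaj' : ∀ k, 1 ≤ k → k ≤ d - 1 → partialSum k (x ∘ ρ) ≤ partialSum k v := fun k h1 h2 => by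
    rw [← sumKLargest_eq_partialSum (by omega) hρ, sumKLargest_comp_perm]
    exact hmaj k h1 h2
  refine ⟨τ.symm, ?_⟩
  calc ∑ i, c i * x i = ∑ i, (c ∘ τ) i * (x ∘ ρ) ((τ.trans ρ.symm) i) := by
        rw [← Equiv.sum_comp τ]; simp
    _ ≤ ∑ i, (c ∘ τ) i * (x ∘ ρ) i := (hτ.monovary hρ).sum_mul_comp_perm_le_sum_mul
    _ ≤ ∑ i, (c ∘ τ) i * v i :=
        sum_mul_le_sum_mul_of_partialSum_le hτ hmaj' (by rw [← hsum]; exact Equiv.sum_comp ρ x)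
    _ = ∑ i, c i * (v ∘ τ.symm) i := by
        rw [← Equiv.sum_comp τ (fun i => c i * (v ∘ τ.symm) i)]; simp

theorem mem_permutohedron_iff {v x : Fin d → ℝ} (hv : Antitone v) :
    x ∈ permutohedron v ↔ ∑ i, x i = ∑ i, v i ∧
      ∀ k, 1 ≤ k → k ≤ d - 1 → sumKLargest k x ≤ partialSum k v := by
  refine ⟨fun hx => ⟨sum_eq_of_mem_permutohedron hx,
    fun k _ hk => sumKLargest_le_of_mem_permutohedron hv (by omega) hx⟩, ?_⟩
  rintro ⟨hsum, hmaj⟩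
  by_contra hx
  obtain ⟨f, u, hfP, hfx⟩ := geometric_hahn_banach_closed_point (convex_convexHull ℝ _)
    (isCompact_permutohedron v).isClosed hx
  have hf : ∀ y, f y = ∑ i, f (Pi.single i 1) * y i := fun y => by
    conv_lhs => rw [← univ_sum_single y]
    refine (map_sum f _ _).trans (sum_congr rfl fun i _ => ?_)
    rw [show Pi.single i (y i) = y i • Pi.single i (1 : ℝ) by
      rw [← Pi.single_smul', smul_eq_mul, mul_one], map_smul, smul_eq_mul, mul_comm]
  obtain ⟨σ, hσ⟩ := exists_perm_sum_mul_le hsum hmaj fun i => f (Pi.single i 1)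
  have := hfP _ (comp_perm_mem_permutohedron v σ)
  rw [hf] at this hfx
  linarith

theorem permutohedron_add_of_antitone {a b : Fin d → ℝ} (ha : Antitone a) (hb : Antitone b) :
    permutohedron a + permutohedron b = permutohedron (a + b) := by
  refine subset_antisymm ?_ (permutohedron_add_subset a b)
  intro z hz
  obtain ⟨x, hx, y, hy, rfl⟩ := Set.mem_add.1 hz
  rw [mem_permutohedron_iff (show Antitone (a + b) from ha.add hb)]
  refine ⟨by simp only [Pi.add_apply, sum_add_distrib, sum_eq_of_mem_permutohedron hx,
    sum_eq_of_mem_permutohedron hy], fun k _ hk => ?_⟩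
  calc sumKLargest k (x + y) ≤ sumKLargest k x + sumKLargest k y :=
        sumKLargest_add_le (by omega) x y
    _ ≤ partialSum k a + partialSum k b := add_le_add
        (sumKLargest_le_of_mem_permutohedron ha (by omega) hx)
        (sumKLargest_le_of_mem_permutohedron hb (by omega) hy)
    _ = partialSum k (a + b) := (partialSum_add k a b).symm

theorem smul_permutohedron_add_smul_permutohedron {a b : Fin d → ℝ} (ha : Antitone a)
    (hb : Antitone b) {s t : ℝ} (hs : 0 ≤ s) (ht : 0 ≤ t) :
    s • permutohedron a + t • permutohedron b = permutohedron (s • a + t • b) := by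
  rw [← permutohedron_smul, ← permutohedron_smul]
  exact permutohedron_add_of_antitone (ha.const_smul hs) (hb.const_smul ht)

end Rado

section HartreeFock

variable {N : ℕ}

theorem antitone_of_eq_ite_lt {v : Fin d → ℝ}
    (hv : ∀ i : Fin d, v i = if (i : ℕ) < N then 1 else 0) : Antitone v := by
  intro i j hij
  rw [hv, hv]
  by_cases hj : (j : ℕ) < N
  · rw [if_pos hj, if_pos ((show (i : ℕ) ≤ j from hij).trans_lt hj)]
  · rw [if_neg hj]
    split_ifs <;> norm_num

theorem partialSum_eq_min_of_eq_ite_lt {v : Fin d → ℝ}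
    (hv : ∀ i : Fin d, v i = if (i : ℕ) < N then 1 else 0) {k : ℕ} (hk : k ≤ d) :
    partialSum k v = min (k : ℝ) N := by
  have hfilter : (univ.filter fun i : Fin d => (i : ℕ) < k).filter (fun i : Fin d => (i : ℕ) < N) =
      univ.filter fun i : Fin d => (i : ℕ) < min k N := by
    rw [filter_filter]; simp only [lt_min_iff]
  rw [partialSum, sum_congr rfl fun i _ => hv i, sum_boole, hfilter, Fin.card_filter_val_lt,
    min_eq_right (by omega)]
  push_cast; rfl

theorem partialSum_le_min {a : Fin d → ℝ} (ha : ∀ i, a i ∈ Set.Icc (0 : ℝ) 1)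
    (hsum : ∑ i, a i = N) {k : ℕ} (hk : k ≤ d) : partialSum k a ≤ min (k : ℝ) N := by
  refine le_min ?_ (hsum ▸ sum_le_univ_sum_of_nonneg fun i => (ha i).1)
  calc partialSum k a ≤ #{i : Fin d | (i : ℕ) < k} • (1 : ℝ) :=
        sum_le_card_nsmul _ _ _ fun i _ => (ha i).2
    _ = k := by rw [card_filter_val_lt_of_le hk, nsmul_one]

theorem Omega_eq_partialSum {w : ℝ} {a v : Fin d → ℝ} {k : ℕ}
    (hv : partialSum k v = min (k : ℝ) N) :
    Omega d N k w a = if k = N then min (N - 1 + w) (partialSum k (w • a + (1 - w) • v))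
      else partialSum k (w • a + (1 - w) • v) := by
  rw [partialSum_add, partialSum_smul, partialSum_smul, hv, Omega]
  split_ifs with hk
  · subst hk; rw [min_self]
  · rfl

theorem le_Omega_iff {w t : ℝ} {a v : Fin d → ℝ} {k : ℕ} (hv : partialSum k v = min (k : ℝ) N) :
    t ≤ Omega d N k w a ↔
      t ≤ partialSum k (w • a + (1 - w) • v) ∧ (k = N → t ≤ N - 1 + w) := by
  rw [Omega_eq_partialSum hv]
  split_ifs with hk <;> simp [hk, and_comm]

theorem partialSum_smul_add_smul_le_min {w : ℝ} (hw : w ∈ Set.Icc (0 : ℝ) 1) {a v : Fin d → ℝ}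
    (ha : ∀ i, a i ∈ Set.Icc (0 : ℝ) 1) (hasum : ∑ i, a i = N)
    (hv : ∀ i : Fin d, v i = if (i : ℕ) < N then 1 else 0) {k : ℕ} (hk : k ≤ d) :
    partialSum k (w • a + (1 - w) • v) ≤ min (k : ℝ) N := by
  have := partialSum_le_min ha hasum hk
  rw [partialSum_add, partialSum_smul, partialSum_smul, partialSum_eq_min_of_eq_ite_lt hv hk]
  nlinarith [hw.1, hw.2]

end HartreeFock

/-- `Σ(w, a) = Σ(w) ∩ (w·P_a + (1−w)·P_HF)`: the spectral set cut out
by the bounds `Ω(w,k,N,a)` equals the intersection of `Σ(w)` with the Minkowski sum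
of the scaled permutohedra of `a` and the Hartree–Fock vector. -/
theorem spectral_set_eq_inter_minkowski
    (d N : ℕ) (hN : 1 ≤ N) (hd : N + 1 ≤ d) (w : ℝ) (hw : w ∈ Set.Icc (0 : ℝ) 1)
    (a : Fin d → ℝ) (ha : Antitone a)
    (ha01 : ∀ i, a i ∈ Set.Icc (0 : ℝ) 1) (hasum : ∑ i, a i = (N : ℝ))
    (vHF : Fin d → ℝ) (hvHF : ∀ i : Fin d, vHF i = if (i : ℕ) < N then 1 else 0) :
    { lam : Fin d → ℝ | (∑ i, lam i) = (N : ℝ) ∧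
        ∀ k : ℕ, 1 ≤ k → k ≤ d - 1 → sumKLargest k lam ≤ Omega d N k w a } =
      { lam : Fin d → ℝ | (∑ i, lam i) = (N : ℝ) ∧
          (∀ k : ℕ, 1 ≤ k → k ≤ N - 1 → sumKLargest k lam ≤ (k : ℝ)) ∧
          sumKLargest N lam ≤ (N : ℝ) - 1 + w ∧
          (∀ k : ℕ, N + 1 ≤ k → k ≤ d - 1 → sumKLargest k lam ≤ (N : ℝ)) } ∩
        (w • permutohedron a + (1 - w) • permutohedron vHF) := by
  have hHF : ∀ k ≤ d, partialSum k vHF = min (k : ℝ) N := fun k =>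
    partialSum_eq_min_of_eq_ite_lt hvHF
  have hmix_le : ∀ k ≤ d, partialSum k (w • a + (1 - w) • vHF) ≤ min (k : ℝ) N := fun k =>
    partialSum_smul_add_smul_le_min hw ha01 hasum hvHF
  have hmix_sum : ∑ i, (w • a + (1 - w) • vHF) i = N := by
    rw [← partialSum_self, partialSum_add, partialSum_smul, partialSum_smul, partialSum_self a,
      hasum, hHF d le_rfl, min_eq_right (by exact_mod_cast (by omega : N ≤ d))]
    ring
  have hHF_anti := antitone_of_eq_ite_lt hvHF
  have hmix_anti : Antitone (w • a + (1 - w) • vHF) :=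
    (ha.const_smul hw.1).add (hHF_anti.const_smul (sub_nonneg.2 hw.2))
  rw [smul_permutohedron_add_smul_permutohedron ha hHF_anti hw.1 (sub_nonneg.2 hw.2)]
  ext lam
  simp only [Set.mem_ofPred_eq, Set.mem_inter_iff, mem_permutohedron_iff hmix_anti, hmix_sum]
  constructor
  · rintro ⟨hsum, hΩ⟩
    have hmaj k (h1 : 1 ≤ k) (h2 : k ≤ d - 1) :=
      ((le_Omega_iff (hHF k (by omega))).1 (hΩ k h1 h2)).1
    refine ⟨⟨hsum, fun k h1 h2 => ?_, ((le_Omega_iff (hHF N (by omega))).1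
      (hΩ N hN (by omega))).2 rfl, fun k h1 h2 => ?_⟩, hsum, hmaj⟩
    · exact (hmaj k h1 (by omega)).trans ((hmix_le k (by omega)).trans (min_le_left _ _))
    · exact (hmaj k (by omega) h2).trans ((hmix_le k (by omega)).trans (min_le_right _ _))
  · rintro ⟨⟨hsum, -, hN_le, -⟩, -, hmaj⟩
    exact ⟨hsum, fun k h1 h2 =>
      (le_Omega_iff (hHF k (by omega))).2 ⟨hmaj k h1 h2, fun hk => hk ▸ hN_le⟩⟩
end
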